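/- Let H be a Hopf algebra and V a vector space, with 𝒜 = 𝒜(H,V) the algebra freely generated by H and V. The subalgebra of 𝒜 generated by the H-submodule H·V (under the adjoint action) is naturally isomorphic, as an algebra, to the tensor algebra T(H·V) over the vector space H·V. -/

import Mathlib

open TensorProduct LinearMap

/-- The adjoint action of a Hopf algebra `H` on an algebra `𝒜` containing it (via `ι`):
`h · a = ∑ᵢ h₁ᵢ a S(h₂ᵢ)`, packaged as a bilinear map. -/
noncomputable def adjAct {F H C : Type*} [Field F] [Ring H]
    [HopfAlgebra F H] [Ring C] [Algebra F C] (ι : H →ₐ[F] C) : H →ₗ[F] C →ₗ[F] C :=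
  (TensorProduct.lift ((LinearMap.llcomp F C C C).compl₁₂
      ((LinearMap.mul F C).comp ι.toLinearMap)
      (((LinearMap.mul F C).flip).comp
        (ι.toLinearMap ∘ₗ (HopfAlgebra.antipode (R := F) (A := H)))))) ∘ₗ
    Coalgebra.comul


/-!
Write `W = H ⊗ V`, an `H`-module through the left factor. This action extends to an
`H`-module algebra structure `h ▷ -` on `T(W)`, built as the algebra map
`T(W) → Hom(H, T(W))` (convolution product) lifting `w ↦ (h ↦ h • w)`. By the universal property,
`𝒜` acts on `T(W)`: `H` through `▷` and `v ∈ V` by left multiplication with `1 ⊗ v`. For any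
`H`-module algebra, `∑ h₁ ▷ (b · (S h₂ ▷ c)) = (h ▷ b) · c`, i.e. the adjoint action of `h` on left
multiplication by `b` is left multiplication by `h ▷ b`. Hence `h · v ∈ H·V` acts as left
multiplication by `h ⊗ v`, so the algebra map `T(W) → 𝒜`, `h ⊗ v ↦ h · v`, composed with the
action is the left regular representation of `T(W)`, which is injective. As `T(W) → T(H·V)` is
surjective, `T(H·V) → 𝒜` is injective too, and its image is the subalgebra generated by `H·V`.
-/

lemma TensorProduct.range_lift_eq_span {R M N P : Type*} [CommSemiring R] [AddCommMonoid M]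
    [AddCommMonoid N] [AddCommMonoid P] [Module R M] [Module R N] [Module R P]
    (f : M →ₗ[R] N →ₗ[R] P) :
    range (lift f) = Submodule.span R {p | ∃ m n, f m n = p} := by
  simp only [← Submodule.map_top, ← span_tmul_eq_top, Submodule.map_span]
  congr
  ext
  simp

namespace TensorAlgebra

variable {R M N A : Type*} [CommSemiring R] [AddCommMonoid M] [Module R M] [AddCommMonoid N]
  [Module R N] [Semiring A] [Algebra R A]

lemma lift_ι_comp_surjective {f : M →ₗ[R] N} (hf : Function.Surjective f) :
    Function.Surjective (lift R (ι R ∘ₗ f)) := by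
  rw [← AlgHom.range_eq_top, range_lift, coe_comp, hf.range_comp, adjoin_range_ι]

lemma injective_lift_subtype_range {f : M →ₗ[R] A} (hf : Function.Injective (lift R f)) :
    Function.Injective (lift R (range f).subtype) := by
  have hfactor : (lift R (range f).subtype).comp (lift R (ι R ∘ₗ f.rangeRestrict)) = lift R f :=
    hom_ext (by ext; simp)
  refine Function.Injective.of_comp_right ?_ (lift_ι_comp_surjective f.surjective_rangeRestrict)
  rwa [← AlgHom.coe_comp, hfactor]

end TensorAlgebra

lemma TensorAlgebra.small (R M : Type*) [CommSemiring R] [AddCommMonoid M] [Module R M]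
    [Small.{u} R] [Small.{u} M] : Small.{u} (TensorAlgebra R M) := by
  have : Small.{u} (FreeMonoid M) := small_of_surjective FreeMonoid.toList.symm.surjective
  have : Small.{u} (MonoidAlgebra R (FreeMonoid M)) :=
    small_of_surjective (f := MonoidAlgebra.ofCoeff) fun x ↦ ⟨x.coeff, rfl⟩
  have : Small.{u} (FreeAlgebra R M) :=
    small_of_surjective FreeAlgebra.equivMonoidAlgebraFreeMonoid.symm.surjective
  refine small_of_surjective (f := FreeAlgebra.toTensor (R := R) (M := M)) ?_
  rw [← AlgHom.range_eq_top, eq_top_iff, ← TensorAlgebra.adjoin_range_ι, Algebra.adjoin_le_iff]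
  rintro _ ⟨m, rfl⟩
  exact ⟨FreeAlgebra.ι R m, FreeAlgebra.toTensor_ι m⟩

open Coalgebra WithConv

lemma AlgHom.toConv_mul_toConv_comp_antipode {R H A : Type*} [CommSemiring R] [Semiring H]
    [HopfAlgebra R H] [Semiring A] [Algebra R A] (f : H →ₐ[R] A) :
    toConv f.toLinearMap * toConv (f.toLinearMap ∘ₗ HopfAlgebra.antipode R) = 1 := by
  have h := LinearMap.algHom_comp_convMul_distrib f (toConv LinearMap.id)
    (toConv (HopfAlgebra.antipode R))
  rw [LinearMap.id_mul_antipode] at h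
  ext x
  simpa using congr($h x).symm

namespace TensorAlgebra

variable {R H W : Type*} [CommSemiring R] [Semiring H] [Bialgebra R H]
  [AddCommMonoid W] [Module R W] [Module H W] [IsScalarTower R H W]

noncomputable def measuring : TensorAlgebra R W →ₐ[R] WithConv (H →ₗ[R] TensorAlgebra R W) :=
  lift R <| (WithConv.linearEquiv R _).symm.toLinearMap ∘ₗ
    llcomp R H W (TensorAlgebra R W) (ι R) ∘ₗ (Algebra.lsmul R R W).toLinearMap.flip

@[simp] lemma measuring_ι (w : W) (h : H) : measuring (ι R w) h = ι R (h • w) := by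
  simp [measuring]

@[simp] lemma measuring_algebraMap (r : R) (h : H) :
    measuring (algebraMap R (TensorAlgebra R W) r) h = r • algebraMap R _ (counit h) := by
  simp

lemma measuring_mul_apply {ι : Type*} {h : H} (𝓡 : Repr R h ι) (x y : TensorAlgebra R W) :
    measuring (x * y) h = ∑ i ∈ 𝓡.index, measuring x (𝓡.left i) * measuring y (𝓡.right i) := by
  rw [map_mul, 𝓡.convMul_apply]

lemma measuring_apply_one (x : TensorAlgebra R W) : measuring x (1 : H) = x := by
  induction x using TensorAlgebra.induction with
  | algebraMap r => simp [Algebra.smul_def]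
  | ι w => simp
  | mul x y hx hy => simp [Bialgebra.comul_one, Algebra.TensorProduct.one_def, hx, hy]
  | add x y hx hy => simp [hx, hy]

lemma measuring_apply_mul (x : TensorAlgebra R W) (g h : H) :
    measuring x (g * h) = measuring (measuring x h) g := by
  induction x using TensorAlgebra.induction generalizing g h with
  | algebraMap r =>
    simp only [measuring_algebraMap, Bialgebra.counit_mul, Algebra.smul_def, ← map_mul]
    rw [mul_comm (counit g), mul_assoc]
  | ι w => simp [mul_smul]
  | mul x y hx hy =>
    rw [measuring_mul_apply ((ℛ R g).mul (ℛ R h)), measuring_mul_apply (ℛ R h), map_sum,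
      ofConv_sum, LinearMap.sum_apply, Repr.mul_index, Finset.sum_product, Finset.sum_comm]
    simp only [Repr.mul_left, Repr.mul_right, hx, hy, measuring_mul_apply (ℛ R g)]
  | add x y hx hy => simp [hx, hy]

noncomputable def hopfAction : H →ₐ[R] Module.End R (TensorAlgebra R W) :=
  AlgHom.ofLinearMap ((WithConv.linearEquiv R _).toLinearMap ∘ₗ measuring.toLinearMap).flip
    (LinearMap.ext measuring_apply_one) fun g h ↦ LinearMap.ext fun x ↦ measuring_apply_mul x g h

lemma hopfAction_apply (h : H) (x : TensorAlgebra R W) : hopfAction h x = measuring x h := rfl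

lemma hopfAction_ι (h : H) (w : W) : hopfAction h (ι R w) = ι R (h • w) := measuring_ι w h

/-- The module-algebra rule `h ▷ (b * c) = ∑ (h₁ ▷ b) * (h₂ ▷ c)`, read in the convolution
algebra `Hom(H, End T(W))`. -/
lemma toConv_mulRight_comp_hopfAction (b : TensorAlgebra R W) :
    toConv (mulRight R (mulLeft R b) ∘ₗ (hopfAction (H := H)).toLinearMap) =
      toConv (LinearMap.mul R _ ∘ₗ (hopfAction (H := H)).toLinearMap.flip b) *
        toConv (hopfAction (H := H)).toLinearMap := by
  ext h c
  simp [(ℛ R h).convMul_apply, hopfAction_apply]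

end TensorAlgebra

section AdjointAction

variable {F H C D : Type*} [Field F] [Ring H] [HopfAlgebra F H] [Ring C] [Algebra F C]
  [Ring D] [Algebra F D]

lemma adjAct_eq_convMul (ι : H →ₐ[F] C) (h : H) (a : C) :
    adjAct ι h a = (toConv (mulRight F a ∘ₗ ι.toLinearMap) *
      toConv (ι.toLinearMap ∘ₗ HopfAlgebra.antipode F)) h := by
  simp [adjAct, (ℛ F h).convMul_apply, ← (ℛ F h).eq, mul_assoc]

lemma adjAct_comp (ψ : C →ₐ[F] D) (ι : H →ₐ[F] C) (h : H) (a : C) :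
    ψ (adjAct ι h a) = adjAct (ψ.comp ι) h (ψ a) := by
  simp [adjAct_eq_convMul, (ℛ F h).convMul_apply]

end AdjointAction

lemma TensorAlgebra.adjAct_hopfAction_mulLeft {F H W : Type*} [Field F] [Ring H]
    [HopfAlgebra F H] [AddCommMonoid W] [Module F W] [Module H W] [IsScalarTower F H W]
    (h : H) (b : TensorAlgebra F W) :
    adjAct hopfAction h (mulLeft F b) = mulLeft F (hopfAction h b) := by
  rw [adjAct_eq_convMul, toConv_mulRight_comp_hopfAction, mul_assoc,
    AlgHom.toConv_mul_toConv_comp_antipode, mul_one]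
  rfl

lemma exists_algHom_of_small {R : Type*} {H V A : Type u} [CommSemiring R] [Semiring H]
    [Algebra R H] [AddCommMonoid V] [Module R V] [Ring A] [Algebra R A]
    {ιH : H →ₐ[R] A} {ιV : V →ₗ[R] A}
    (hUP : ∀ (B : Type u) (_ : Ring B) (_ : Algebra R B) (f : H →ₐ[R] B) (g : V →ₗ[R] B),
      ∃! φ : A →ₐ[R] B, φ.comp ιH = f ∧ φ.toLinearMap ∘ₗ ιV = g)
    {B : Type*} [Ring B] [Algebra R B] [Small.{u} B] (f : H →ₐ[R] B) (g : V →ₗ[R] B) :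
    ∃ φ : A →ₐ[R] B, φ.comp ιH = f ∧ φ.toLinearMap ∘ₗ ιV = g := by
  let e := Shrink.algEquiv R B
  obtain ⟨φ, ⟨hH, hV⟩, -⟩ := hUP _ inferInstance inferInstance
    (e.symm.toAlgHom.comp f) (e.symm.toLinearMap ∘ₗ g)
  refine ⟨e.toAlgHom.comp φ, ?_, ?_⟩
  · ext h
    simpa using congr(e $(AlgHom.congr_fun hH h))
  · ext v
    simpa using congr(e $(LinearMap.congr_fun hV v))

open TensorAlgebra in
lemma comp_lift_adjAct_eq_lmul {F H V A : Type*} [Field F] [Ring H] [HopfAlgebra F H]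
    [AddCommGroup V] [Module F V] [Ring A] [Algebra F A] {ιH : H →ₐ[F] A} {ιV : V →ₗ[F] A}
    (φ : A →ₐ[F] Module.End F (TensorAlgebra F (H ⊗[F] V))) (hφH : φ.comp ιH = hopfAction)
    (hφV : φ.toLinearMap ∘ₗ ιV = LinearMap.mul F _ ∘ₗ ι F ∘ₗ TensorProduct.mk F H V 1) :
    φ.comp (lift F (TensorProduct.lift ((adjAct ιH).compl₂ ιV))) = Algebra.lmul F _ := by
  refine hom_ext (TensorProduct.ext' fun h v ↦ ?_)
  have hv : φ (ιV v) = mulLeft F (ι F (1 ⊗ₜ v)) := LinearMap.congr_fun hφV v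
  simp only [AlgHom.comp_toLinearMap, coe_comp, AlgHom.coe_toLinearMap, Function.comp_apply,
    lift_ι_apply, lift.tmul, compl₂_apply, Algebra.coe_lmul_eq_mul]
  rw [adjAct_comp, hφH, hv, adjAct_hopfAction_mulLeft, hopfAction_ι, smul_tmul', smul_eq_mul,
    mul_one]
  rfl

/-- in the algebra `𝒜 = 𝒜(H,V)` freely generated by a Hopf algebra `H` and
a vector space `V`, the subalgebra generated by the `H`-submodule `H·V` is naturally
isomorphic to the tensor algebra on the vector space `H·V`: the canonical algebra map
`T(H·V) → 𝒜` induced by the inclusion `H·V ⊆ 𝒜` is injective with image that subalgebra. -/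
theorem subalgebra_on_HV_is_tensor_algebra
    (F : Type*) (H V 𝒜 : Type u) [Field F] [Ring H] [HopfAlgebra F H]
    [AddCommGroup V] [Module F V] [Ring 𝒜] [Algebra F 𝒜]
    (ιH : H →ₐ[F] 𝒜) (ιV : V →ₗ[F] 𝒜)
    (hUP : ∀ (B : Type u) (_ : Ring B) (_ : Algebra F B) (f : H →ₐ[F] B) (g : V →ₗ[F] B),
      ∃! φ : 𝒜 →ₐ[F] B, φ.comp ιH = f ∧ φ.toLinearMap ∘ₗ ιV = g)
    (HV : Submodule F 𝒜)
    (hHV : HV = Submodule.span F {x : 𝒜 | ∃ (h : H) (v : V), x = adjAct ιH h (ιV v)}) :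
    Function.Injective (TensorAlgebra.lift F HV.subtype) ∧
    (TensorAlgebra.lift F HV.subtype).range = Algebra.adjoin F (HV : Set 𝒜) := by
  have : Small.{u} F := small_of_injective (Bialgebra.algebraMap_injective (R := F) H)
  have : Small.{u} (TensorAlgebra F (H ⊗[F] V)) := TensorAlgebra.small _ _
  have : Small.{u} (Module.End F (TensorAlgebra F (H ⊗[F] V))) :=
    small_of_injective DFunLike.coe_injective
  obtain ⟨φ, hφH, hφV⟩ := exists_algHom_of_small hUP TensorAlgebra.hopfAction
    (LinearMap.mul F _ ∘ₗ TensorAlgebra.ι F ∘ₗ mk F H V 1)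
  have hHV_range : HV = range (TensorProduct.lift ((adjAct ιH).compl₂ ιV)) := by
    simp [hHV, TensorProduct.range_lift_eq_span, eq_comm]
  have hinj : Function.Injective (TensorAlgebra.lift F (lift ((adjAct ιH).compl₂ ιV))) := by
    refine Function.Injective.of_comp (f := φ) ?_
    rw [← AlgHom.coe_comp, comp_lift_adjAct_eq_lmul φ hφH hφV]
    exact Algebra.lmul_injective
  refine ⟨?_, by simp⟩
  subst hHV_range
  exact TensorAlgebra.injective_lift_subtype_range hinj
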